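/- arXiv:math/0205128 — 5 statements merged into one kernel-verified Lean document; each statement's English description precedes it below -/
import Mathlib

section
/- If a configuration of vectors in the plane is uniform (every pair of vectors linearly independent) and balanced (for every vector b_j in the configuration, the multiset of determinants det(b_i, b_j) over all i ≠ j is symmetric around the origin), then the configuration has an odd number of vectors. -/
noncomputable def det2 (u v : ℝ × ℝ) : ℝ := u.1 * v.2 - u.2 * v.1

def symmZero (S : Multiset ℝ) : Prop := S.map (fun x => -x) = S

noncomputable def dets {n : ℕ} (b : Fin n → ℝ × ℝ) (j : Fin n) : Multiset ℝ :=
  (Finset.univ.filter (fun i => det2 (b i) (b j) ≠ 0)).val.map (fun i => det2 (b i) (b j))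

lemma symm_no_zero_even_card (S : Multiset ℝ) (h0 : (0:ℝ) ∉ S) (hs : symmZero S) :
    Even (Multiset.card S) := by
  have hpart : Multiset.card S
      = Multiset.card (S.filter (fun x => 0 < x))
      + Multiset.card (S.filter (fun x => ¬ 0 < x)) := by
    rw [← Multiset.card_add, Multiset.filter_add_not]
  have hneg : S.filter (fun x => ¬ 0 < x) = S.filter (fun x => x < 0) := by
    apply Multiset.filter_congr
    intro x hx
    constructor
    · intro h
      rcases lt_trichotomy x 0 with h' | h' | h'
      · exact h'
      · exact absurd (h' ▸ hx) h0
      · exact absurd h' h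
    · intro h; exact not_lt.mpr h.le
  have hneg2 : S.filter (fun x => x < 0)
      = (S.filter (fun x => 0 < x)).map (fun x => -x) := by
    conv_lhs => rw [← hs]
    rw [Multiset.filter_map]
    congr 1
    apply Multiset.filter_congr
    intro x hx
    simp only [Function.comp_apply, neg_lt_zero]
  rw [hpart, hneg, hneg2, Multiset.card_map]
  exact ⟨_, rfl⟩

/-- A uniform balanced plane configuration has an odd number of vectors. -/
theorem stmt0 {n : ℕ} (hn : 0 < n) (b : Fin n → ℝ × ℝ) (hnz : ∀ i, b i ≠ 0)
    (huni : ∀ i j, i ≠ j → det2 (b i) (b j) ≠ 0)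
    (hbal : ∀ j, symmZero (dets b j)) : Odd n := by
  obtain ⟨j⟩ : Nonempty (Fin n) := ⟨⟨0, hn⟩⟩
  have h0 : (0:ℝ) ∉ dets b j := by
    intro h
    rw [dets, Multiset.mem_map] at h
    obtain ⟨i, hi, hdet⟩ := h
    rw [Finset.mem_val, Finset.mem_filter] at hi
    exact hi.2 hdet
  have heven := symm_no_zero_even_card _ h0 (hbal j)
  have hcard : Multiset.card (dets b j) = n - 1 := by
    rw [dets, Multiset.card_map]
    have hfs : Finset.univ.filter (fun i => det2 (b i) (b j) ≠ 0) = {j}ᶜ := by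
      ext i
      simp only [Finset.mem_filter, Finset.mem_univ, true_and, Finset.mem_compl,
        Finset.mem_singleton]
      constructor
      · intro h hij
        subst hij
        apply h
        simp [det2]; ring
      · intro h; exact huni i j h
    rw [← Finset.card_def, hfs, Finset.card_compl]
    simp
  rw [hcard] at heven
  obtain ⟨k, hk⟩ := heven
  exact ⟨k, by omega⟩
end

section
/- The configuration B = {e₁, e₂, -e₁-e₂, λe₁, -λe₁, μe₂, -μe₂} ⊂ ℝ², where λ, μ are nonzero reals, is balanced: every cocircuit of B is balanced. -/
lemma dets_eq7 (b : Fin 7 → ℝ × ℝ) (j : Fin 7) :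
    dets b j = Multiset.filter (fun x => x ≠ 0)
      ↑(List.map (fun i => det2 (b i) (b j)) [0,1,2,3,4,5,6]) := by
  unfold dets
  conv_rhs => rw [← Multiset.map_coe, Multiset.filter_map]
  rw [Finset.filter_val]
  congr 1

lemma symmZero_pair (a c : ℝ) : symmZero ({a} + ({-a} + ({c} + {-c}))) := by
  show Multiset.map (fun x => -x) (a ::ₘ -a ::ₘ c ::ₘ -c ::ₘ 0)
      = (a ::ₘ -a ::ₘ c ::ₘ -c ::ₘ 0)
  simp only [Multiset.map_cons, neg_neg, Multiset.map_zero]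
  rw [Multiset.cons_swap (-a) a, Multiset.cons_swap (-c) c]

lemma symmZero_pair' (a c : ℝ) : symmZero ({-a} + ({a} + ({-c} + {c}))) := by
  show Multiset.map (fun x => -x) (-a ::ₘ a ::ₘ -c ::ₘ c ::ₘ 0)
      = (-a ::ₘ a ::ₘ -c ::ₘ c ::ₘ 0)
  simp only [Multiset.map_cons, neg_neg, Multiset.map_zero]
  rw [Multiset.cons_swap a (-a), Multiset.cons_swap c (-c)]

lemma symmZero_triple' (a c d : ℝ) :
    symmZero ({-a} + ({a} + ({-c} + ({c} + ({d} + {-d}))))) := by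
  show Multiset.map (fun x => -x) (-a ::ₘ a ::ₘ -c ::ₘ c ::ₘ d ::ₘ -d ::ₘ 0)
      = (-a ::ₘ a ::ₘ -c ::ₘ c ::ₘ d ::ₘ -d ::ₘ 0)
  simp only [Multiset.map_cons, neg_neg, Multiset.map_zero]
  rw [Multiset.cons_swap a (-a), Multiset.cons_swap c (-c), Multiset.cons_swap (-d) d]

/-- The configuration {e₁, e₂, -e₁-e₂, λe₁, -λe₁, μe₂, -μe₂} is balanced. -/
theorem stmt8 (l m : ℝ) (hl : l ≠ 0) (hm : m ≠ 0) :
    ∀ j, symmZero (dets (![((1:ℝ),(0:ℝ)), (0,1), (-1,-1), (l,0), (-l,0), (0,m), (0,-m)] : Fin 7 → ℝ × ℝ) j) := by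
  intro j
  set b : Fin 7 → ℝ × ℝ := ![((1:ℝ),(0:ℝ)), (0,1), (-1,-1), (l,0), (-l,0), (0,m), (0,-m)] with hb
  have h0 : b 0 = (1,0) := rfl
  have h1 : b 1 = (0,1) := rfl
  have h2 : b 2 = (-1,-1) := rfl
  have h3 : b 3 = (l,0) := rfl
  have h4 : b 4 = (-l,0) := rfl
  have h5 : b 5 = (0,m) := rfl
  have h6 : b 6 = (0,-m) := rfl
  have hml : m * l ≠ 0 := mul_ne_zero hm hl
  have hlm : l * m ≠ 0 := mul_ne_zero hl hm
  fin_cases j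
  · show symmZero (dets b 0)
    rw [dets_eq7]
    have e : List.map (fun i => det2 (b i) (b 0)) [0,1,2,3,4,5,6]
        = [0, -1, 1, 0, 0, -m, m] := by
      simp [det2, h0, h1, h2, h3, h4, h5, h6]
    rw [e, show ((↑[(0:ℝ), -1, 1, 0, 0, -m, m] : Multiset ℝ))
        = ((0:ℝ) ::ₘ -1 ::ₘ 1 ::ₘ 0 ::ₘ 0 ::ₘ -m ::ₘ m ::ₘ 0) from rfl]
    simp only [Multiset.filter_cons, Multiset.filter_zero, hm, hl, hml, hlm, neg_ne_zero,
      one_ne_zero, ne_eq, not_true_eq_false, not_false_eq_true, if_true, if_false,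
      ite_true, ite_false, zero_add, add_zero]
    exact symmZero_pair' 1 m
  · show symmZero (dets b 1)
    rw [dets_eq7]
    have e : List.map (fun i => det2 (b i) (b 1)) [0,1,2,3,4,5,6]
        = [1, 0, -1, l, -l, 0, 0] := by
      simp [det2, h0, h1, h2, h3, h4, h5, h6]
    rw [e, show ((↑[(1:ℝ), 0, -1, l, -l, 0, 0] : Multiset ℝ))
        = ((1:ℝ) ::ₘ 0 ::ₘ -1 ::ₘ l ::ₘ -l ::ₘ 0 ::ₘ 0 ::ₘ 0) from rfl]
    simp only [Multiset.filter_cons, Multiset.filter_zero, hm, hl, hml, hlm, neg_ne_zero,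
      one_ne_zero, ne_eq, not_true_eq_false, not_false_eq_true, if_true, if_false,
      ite_true, ite_false, zero_add, add_zero]
    exact symmZero_pair 1 l
  · show symmZero (dets b 2)
    rw [dets_eq7]
    have e : List.map (fun i => det2 (b i) (b 2)) [0,1,2,3,4,5,6]
        = [-1, 1, 0, -l, l, m, -m] := by
      simp [det2, h0, h1, h2, h3, h4, h5, h6]
    rw [e, show ((↑[(-1:ℝ), 1, 0, -l, l, m, -m] : Multiset ℝ))
        = ((-1:ℝ) ::ₘ 1 ::ₘ 0 ::ₘ -l ::ₘ l ::ₘ m ::ₘ -m ::ₘ 0) from rfl]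
    simp only [Multiset.filter_cons, Multiset.filter_zero, hm, hl, hml, hlm, neg_ne_zero,
      one_ne_zero, ne_eq, not_true_eq_false, not_false_eq_true, if_true, if_false,
      ite_true, ite_false, zero_add, add_zero]
    exact symmZero_triple' 1 l m
  · show symmZero (dets b 3)
    rw [dets_eq7]
    have e : List.map (fun i => det2 (b i) (b 3)) [0,1,2,3,4,5,6]
        = [0, -l, l, 0, 0, -(m*l), m*l] := by
      simp [det2, h0, h1, h2, h3, h4, h5, h6]
    rw [e, show ((↑[(0:ℝ), -l, l, 0, 0, -(m*l), m*l] : Multiset ℝ))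
        = ((0:ℝ) ::ₘ -l ::ₘ l ::ₘ 0 ::ₘ 0 ::ₘ -(m*l) ::ₘ m*l ::ₘ 0) from rfl]
    simp only [Multiset.filter_cons, Multiset.filter_zero, hm, hl, hml, hlm, neg_ne_zero,
      one_ne_zero, ne_eq, not_true_eq_false, not_false_eq_true, if_true, if_false,
      ite_true, ite_false, zero_add, add_zero]
    exact symmZero_pair' l (m*l)
  · show symmZero (dets b 4)
    rw [dets_eq7]
    have e : List.map (fun i => det2 (b i) (b 4)) [0,1,2,3,4,5,6]
        = [0, l, -l, 0, 0, m*l, -(m*l)] := by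
      simp [det2, h0, h1, h2, h3, h4, h5, h6]
    rw [e, show ((↑[(0:ℝ), l, -l, 0, 0, m*l, -(m*l)] : Multiset ℝ))
        = ((0:ℝ) ::ₘ l ::ₘ -l ::ₘ 0 ::ₘ 0 ::ₘ m*l ::ₘ -(m*l) ::ₘ 0) from rfl]
    simp only [Multiset.filter_cons, Multiset.filter_zero, hm, hl, hml, hlm, neg_ne_zero,
      one_ne_zero, ne_eq, not_true_eq_false, not_false_eq_true, if_true, if_false,
      ite_true, ite_false, zero_add, add_zero]
    exact symmZero_pair l (m*l)
  · show symmZero (dets b 5)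
    rw [dets_eq7]
    have e : List.map (fun i => det2 (b i) (b 5)) [0,1,2,3,4,5,6]
        = [m, 0, -m, l*m, -(l*m), 0, 0] := by
      simp [det2, h0, h1, h2, h3, h4, h5, h6]
    rw [e, show ((↑[(m:ℝ), 0, -m, l*m, -(l*m), 0, 0] : Multiset ℝ))
        = ((m:ℝ) ::ₘ 0 ::ₘ -m ::ₘ l*m ::ₘ -(l*m) ::ₘ 0 ::ₘ 0 ::ₘ 0) from rfl]
    simp only [Multiset.filter_cons, Multiset.filter_zero, hm, hl, hml, hlm, neg_ne_zero,
      one_ne_zero, ne_eq, not_true_eq_false, not_false_eq_true, if_true, if_false,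
      ite_true, ite_false, zero_add, add_zero]
    exact symmZero_pair m (l*m)
  · show symmZero (dets b 6)
    rw [dets_eq7]
    have e : List.map (fun i => det2 (b i) (b 6)) [0,1,2,3,4,5,6]
        = [-m, 0, m, -(l*m), l*m, 0, 0] := by
      simp [det2, h0, h1, h2, h3, h4, h5, h6]
    rw [e, show ((↑[(-m:ℝ), 0, m, -(l*m), l*m, 0, 0] : Multiset ℝ))
        = ((-m:ℝ) ::ₘ 0 ::ₘ m ::ₘ -(l*m) ::ₘ l*m ::ₘ 0 ::ₘ 0 ::ₘ 0) from rfl]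
    simp only [Multiset.filter_cons, Multiset.filter_zero, hm, hl, hml, hlm, neg_ne_zero,
      one_ne_zero, ne_eq, not_true_eq_false, not_false_eq_true, if_true, if_false,
      ite_true, ite_false, zero_add, add_zero]
    exact symmZero_pair' m (l*m)
end

section
/- Let B be a balanced configuration of seven nonzero vectors in ℝ² that spans the plane. Then the sum of all vectors of B is zero (B is nonconfluent). -/
lemma symmZero.sum_eq_zero {S : Multiset ℝ} (h : symmZero S) : S.sum = 0 := by
  have hneg : S.sum = -S.sum := by
    conv_lhs => rw [← h]
    rw [Multiset.sum_map_neg']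
  linarith

lemma det2_sum_left {ι : Type*} (s : Finset ι) (u : ι → ℝ × ℝ) (v : ℝ × ℝ) :
    det2 (∑ i ∈ s, u i) v = ∑ i ∈ s, det2 (u i) v := by
  simp only [det2, Prod.fst_sum, Prod.snd_sum, Finset.sum_mul, Finset.sum_sub_distrib]

lemma sum_dets {n : ℕ} (b : Fin n → ℝ × ℝ) (j : Fin n) :
    (dets b j).sum = det2 (∑ i, b i) (b j) := by
  rw [det2_sum_left, dets, Finset.sum_map_val,
    Finset.sum_filter_of_ne fun _ _ h => h]

noncomputable def det2Left (u : ℝ × ℝ) : ℝ × ℝ →ₗ[ℝ] ℝ :=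
  u.1 • LinearMap.snd ℝ ℝ ℝ - u.2 • LinearMap.fst ℝ ℝ ℝ

lemma det2Left_apply (u v : ℝ × ℝ) : det2Left u v = det2 u v := by
  simp [det2Left, det2, mul_comm]

lemma eq_zero_of_det2_eq_zero_of_span_eq_top {ι : Type*} {v : ι → ℝ × ℝ}
    (hspan : Submodule.span ℝ (Set.range v) = ⊤) {u : ℝ × ℝ} (h : ∀ i, det2 u (v i) = 0) :
    u = 0 := by
  have hzero : det2Left u = 0 :=
    LinearMap.ext_on_range hspan fun i => by rw [det2Left_apply, h, LinearMap.zero_apply]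
  have h1 : det2 u (0, 1) = 0 := by rw [← det2Left_apply, hzero, LinearMap.zero_apply]
  have h2 : det2 u (1, 0) = 0 := by rw [← det2Left_apply, hzero, LinearMap.zero_apply]
  simp only [det2] at h1 h2
  exact Prod.ext (by simp only [Prod.fst_zero]; linarith) (by simp only [Prod.snd_zero]; linarith)

theorem stmt11_general (b : Fin 7 → ℝ × ℝ)
    (hspan : Submodule.span ℝ (Set.range b) = ⊤)
    (hbal : ∀ j, symmZero (dets b j)) :
    ∑ i, b i = 0 :=
  eq_zero_of_det2_eq_zero_of_span_eq_top hspan fun j => sum_dets b j ▸ (hbal j).sum_eq_zero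

/-- A balanced configuration of seven nonzero plane vectors spanning the plane is
nonconfluent: the vectors sum to zero. -/
theorem stmt11 (b : Fin 7 → ℝ × ℝ) (hnz : ∀ i, b i ≠ 0)
    (hspan : Submodule.span ℝ (Set.range b) = ⊤)
    (hbal : ∀ j, symmZero (dets b j)) :
    ∑ i, b i = 0 :=
  stmt11_general b hspan hbal
end

section
/- Let B be a balanced configuration of seven nonzero vectors in ℝ² such that exactly five of the vectors lie on one line L through the origin and the remaining two vectors are linearly independent. Then, after a GL(2,ℝ) change of coordinates and reordering, B = {e₁, e₂ , -e₁-e₂, λe₁, -λe₁, μe₁, -μe₁} for some nonzero reals λ, μ. -/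
open Finset

@[simp] lemma det2_self (u : ℝ × ℝ) : det2 u u = 0 := by
  simp only [det2]; ring

lemma det2_anticomm (u v : ℝ × ℝ) : -det2 u v = det2 v u := by
  simp only [det2]; ring

@[simp] lemma det2_add_left (u w z : ℝ × ℝ) : det2 (u + w) z = det2 u z + det2 w z := by
  simp only [det2, Prod.fst_add, Prod.snd_add]; ring

@[simp] lemma det2_neg_left (u z : ℝ × ℝ) : det2 (-u) z = -det2 u z := by
  simp only [det2, Prod.fst_neg, Prod.snd_neg]; ring

lemma det2_smul_eq_sub (x y w : ℝ × ℝ) : det2 x y • w = det2 x w • y - det2 y w • x := by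
  ext <;> simp only [det2, Prod.smul_fst, Prod.smul_snd, Prod.fst_sub, Prod.snd_sub,
    smul_eq_mul] <;> ring

lemma det2_eq_zero_of_det2_eq_zero {x y w : ℝ × ℝ} (hw : w ≠ 0) (hx : det2 x w = 0)
    (hy : det2 y w = 0) : det2 x y = 0 := by
  have h := det2_smul_eq_sub x y w
  rw [hx, hy, zero_smul, zero_smul, sub_zero] at h
  exact (smul_eq_zero.1 h).resolve_right hw

lemma det2_ne_zero_of_det2_eq_zero {x y w : ℝ × ℝ} (hx : x ≠ 0) (hxw : det2 x w = 0)
    (hyw : det2 y w ≠ 0) : det2 y x ≠ 0 := fun hyx =>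
  hyw (det2_eq_zero_of_det2_eq_zero hx hyx (by rw [← det2_anticomm, hxw, neg_zero]))

noncomputable def coordEquiv (u w : ℝ × ℝ) (h : det2 u w ≠ 0) : (ℝ × ℝ) ≃ₗ[ℝ] ℝ × ℝ where
  toFun z := (det2 z w / det2 u w, det2 u z / det2 u w)
  invFun c := c.1 • u + c.2 • w
  map_add' x y := by ext <;> simp only [det2, Prod.fst_add, Prod.snd_add] <;> ring
  map_smul' t x := by
    ext <;> simp only [det2, Prod.smul_fst, Prod.smul_snd, smul_eq_mul, RingHom.id_apply] <;> ring
  left_inv z := by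
    ext <;> simp only [Prod.fst_add, Prod.snd_add, Prod.smul_fst, Prod.smul_snd, smul_eq_mul,
      div_mul_eq_mul_div, ← add_div, div_eq_iff h] <;> simp only [det2] <;> ring
  right_inv c := by
    ext <;> simp only [div_eq_iff h] <;>
      simp only [det2, Prod.fst_add, Prod.snd_add, Prod.smul_fst, Prod.smul_snd, smul_eq_mul] <;>
      ring

lemma coordEquiv_apply (u w : ℝ × ℝ) (h : det2 u w ≠ 0) (z : ℝ × ℝ) :
    coordEquiv u w h z = (det2 z w / det2 u w, det2 u z / det2 u w) := rfl

lemma coordEquiv_left (u w : ℝ × ℝ) (h : det2 u w ≠ 0) : coordEquiv u w h u = (1, 0) := by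
  simp [coordEquiv_apply, h]

lemma coordEquiv_right (u w : ℝ × ℝ) (h : det2 u w ≠ 0) : coordEquiv u w h w = (0, 1) := by
  simp [coordEquiv_apply, h]

namespace symmZero

lemma neg_mem {S : Multiset ℝ} (h : symmZero S) {a : ℝ} (ha : a ∈ S) : -a ∈ S := by
  rw [← h]; exact Multiset.mem_map_of_mem _ ha

lemma exists_eq_cons {a : ℝ} {M : Multiset ℝ} (h : symmZero (a ::ₘ M)) (ha : a ≠ 0) :
    ∃ M', M = -a ::ₘ M' ∧ symmZero M' := by
  have hmem : -a ∈ M := by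
    rcases Multiset.mem_cons.1 (h.neg_mem (Multiset.mem_cons_self a M)) with h' | h'
    · exact absurd (self_eq_neg.1 h'.symm) ha
    · exact h'
  refine ⟨M.erase (-a), (Multiset.cons_erase hmem).symm, ?_⟩
  rw [← Multiset.cons_erase hmem] at h
  unfold symmZero at h ⊢
  simp only [Multiset.map_cons, neg_neg] at h
  rw [Multiset.cons_swap] at h
  exact Multiset.cons_inj_right _ |>.1 (Multiset.cons_inj_right _ |>.1 h)

lemma exists_eq_add_map_neg {M : Multiset ℝ} (h : symmZero M) (h0 : (0 : ℝ) ∉ M) :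
    ∃ N : Multiset ℝ, M = N + N.map Neg.neg := by
  induction hn : Multiset.card M using Nat.strong_induction_on generalizing M with
  | _ n ih =>
  rcases Multiset.empty_or_exists_mem M with rfl | ⟨a, ha⟩
  · exact ⟨0, rfl⟩
  rw [← Multiset.cons_erase ha] at h h0 hn
  obtain ⟨M', hM', hsymm⟩ := h.exists_eq_cons (fun h' => h0 (h' ▸ Multiset.mem_cons_self _ _))
  rw [hM'] at h0 hn
  obtain ⟨N, hN⟩ := ih _ (by simp at hn; omega) hsymm
    (fun h' => h0 (Multiset.mem_cons_of_mem (Multiset.mem_cons_of_mem h'))) rfl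
  refine ⟨a ::ₘ N, ?_⟩
  rw [← Multiset.cons_erase ha, hM', hN]
  simp only [Multiset.cons_add, Multiset.map_cons, Multiset.add_cons]
  exact Multiset.cons_swap _ _ _

lemma of_map_mul {M : Multiset ℝ} {c : ℝ} (hc : c ≠ 0) (h : symmZero (M.map (c * ·))) :
    symmZero M := by
  unfold symmZero at h ⊢
  rw [Multiset.map_map] at h
  have := congrArg (Multiset.map (c⁻¹ * ·)) h
  simpa [Multiset.map_map, Function.comp_def, hc] using this

lemma exists_eq_of_neg_one_cons {Y : Multiset ℝ} (h : symmZero (-1 ::ₘ Y))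
    (h0 : (0 : ℝ) ∉ Y) (hY : Multiset.card Y = 5) :
    ∃ l m : ℝ, l ≠ 0 ∧ m ≠ 0 ∧ Y = {1, l, -l, m, -m} := by
  obtain ⟨M, rfl, hM⟩ := h.exists_eq_cons (by norm_num)
  obtain ⟨N, rfl⟩ := hM.exists_eq_add_map_neg (fun h' => h0 (Multiset.mem_cons_of_mem h'))
  obtain ⟨l, m, rfl⟩ := Multiset.card_eq_two (s := N) |>.1 (by simp at hY; omega)
  exact ⟨l, m, fun hl => h0 (by simp [hl]), fun hm => h0 (by simp [hm]),
    by simp [Multiset.cons_swap]⟩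

end symmZero

lemma Fintype.exists_perm_of_map_univ_eq {ι α : Type*} [Fintype ι] {u w : ι → α}
    (h : Finset.univ.val.map u = Finset.univ.val.map w) :
    ∃ σ : Equiv.Perm ι, ∀ k, u k = w (σ k) := by
  classical
  refine ⟨Equiv.ofFiberEquiv (fun c => Fintype.equivOfCardEq ?_),
    fun k => (Equiv.ofFiberEquiv_map _ k).symm⟩
  have := congrArg (Multiset.count c) h
  simp only [Multiset.count_map] at this
  simp only [Fintype.card_subtype, Finset.card_def, Finset.filter_val]
  convert this using 3 <;> exact eq_comm

lemma Finset.exists_univ_val_eq_cons_cons_filter {ι : Type*} [Fintype ι] (P : ι → Prop)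
    [DecidablePred P] (h : #(univ.filter P) + 2 = Fintype.card ι) :
    ∃ p q, p ≠ q ∧ ¬P p ∧ ¬P q ∧ (univ : Finset ι).val = p ::ₘ q ::ₘ (univ.filter P).val := by
  have hcard : #{i | ¬P i} = 2 := by
    have := Finset.card_filter_add_card_filter_not (s := (univ : Finset ι)) P
    rw [card_univ] at this
    omega
  classical
  obtain ⟨p, q, hpq, hpq'⟩ := Finset.card_eq_two.1 hcard
  have hmem : ∀ i, ¬P i ↔ i = p ∨ i = q := fun i => by
    simpa using congrArg (i ∈ ·) hpq'
  refine ⟨p, q, hpq, (hmem p).2 (Or.inl rfl), (hmem q).2 (Or.inr rfl), ?_⟩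
  rw [← Multiset.filter_add_not P univ.val, ← Finset.filter_val, ← Finset.filter_val, hpq',
    add_comm]
  simp [Finset.insert_val_of_notMem (Finset.notMem_singleton.2 hpq)]

noncomputable def indicesOnLine {n : ℕ} (b : Fin n → ℝ × ℝ) (v : ℝ × ℝ) : Finset (Fin n) :=
  univ.filter fun i => det2 (b i) v = 0

@[simp] lemma mem_indicesOnLine {n : ℕ} {b : Fin n → ℝ × ℝ} {v : ℝ × ℝ} {i : Fin n} :
    i ∈ indicesOnLine b v ↔ det2 (b i) v = 0 := by
  simp [indicesOnLine]

section TwoOffLine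

variable {n : ℕ} {b : Fin n → ℝ × ℝ} {v : ℝ × ℝ} {p q : Fin n}

lemma dets_eq_filter_map (b : Fin n → ℝ × ℝ) (j : Fin n) :
    dets b j = (univ.val.map fun i => det2 (b i) (b j)).filter (· ≠ 0) := by
  rw [dets, Multiset.filter_map, Finset.filter_val]; rfl

lemma det2_add_eq_zero_of_symmZero_dets
    (huniv : (univ : Finset (Fin n)).val = p ::ₘ q ::ₘ (indicesOnLine b v).val)
    (hv : v ≠ 0) (hp : det2 (b p) v ≠ 0) (hq : det2 (b q) v ≠ 0) {j : Fin n}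
    (hj : det2 (b j) v = 0) (hbj : b j ≠ 0) (hbal : symmZero (dets b j)) :
    det2 (b p + b q) (b j) = 0 := by
  have hpj := det2_ne_zero_of_det2_eq_zero hbj hj hp
  have hqj := det2_ne_zero_of_det2_eq_zero hbj hj hq
  have hdets : dets b j = det2 (b p) (b j) ::ₘ {det2 (b q) (b j)} := by
    rw [dets_eq_filter_map, huniv, Multiset.map_cons, Multiset.map_cons,
      Multiset.filter_cons_of_pos (p := (· ≠ 0)) _ hpj,
      Multiset.filter_cons_of_pos (p := (· ≠ 0)) _ hqj, Multiset.filter_eq_nil.2]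
    · rfl
    · simp only [Multiset.mem_map, Finset.mem_val, mem_indicesOnLine]
      rintro _ ⟨i, hi, rfl⟩
      exact not_not.2 (det2_eq_zero_of_det2_eq_zero hv hi hj)
  rw [hdets] at hbal
  obtain ⟨M, hM, -⟩ := hbal.exists_eq_cons hpj
  rw [det2_add_left, (Multiset.singleton_eq_cons_iff _).1 hM |>.1, add_neg_cancel]

lemma dets_eq_map_cons
    (huniv : (univ : Finset (Fin n)).val = p ::ₘ q ::ₘ (indicesOnLine b v).val)
    (hnz : ∀ i, b i ≠ 0) (hp : det2 (b p) v ≠ 0) (hqp : det2 (b q) (b p) ≠ 0) :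
    dets b p = (q ::ₘ (indicesOnLine b v).val).map fun i => det2 (b i) (b p) := by
  rw [dets_eq_filter_map, huniv, Multiset.map_cons, Multiset.filter_cons_of_neg _ (by simp),
    Multiset.filter_eq_self.2]
  simp only [Multiset.mem_map, Multiset.mem_cons, Finset.mem_val, mem_indicesOnLine]
  rintro _ ⟨i, rfl | hi, rfl⟩
  · exact hqp
  · rw [← det2_anticomm, neg_ne_zero]
    exact det2_ne_zero_of_det2_eq_zero (hnz i) hi hp

lemma exists_linearEquiv_normalize
    (huniv : (univ : Finset (Fin n)).val = p ::ₘ q ::ₘ (indicesOnLine b v).val)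
    (hv : v ≠ 0) (hnz : ∀ i, b i ≠ 0) (hbal : ∀ j, symmZero (dets b j))
    (hp : det2 (b p) v ≠ 0) (hq : det2 (b q) v ≠ 0) (hqp : det2 (b q) (b p) ≠ 0) {j : Fin n}
    (hj : det2 (b j) v = 0) :
    ∃ g : (ℝ × ℝ) ≃ₗ[ℝ] ℝ × ℝ, ∃ y : Fin n → ℝ,
      univ.val.map (g ∘ b) = (0, 1) ::ₘ (-1, -1) ::ₘ ((indicesOnLine b v).val.map y).map (·, 0) ∧
      (0 : ℝ) ∉ (indicesOnLine b v).val.map y ∧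
      symmZero (-1 ::ₘ (indicesOnLine b v).val.map y) := by
  have hline : ∀ i, det2 (b i) v = 0 → det2 (b p + b q) (b i) = 0 := fun i hi =>
    det2_eq_zero_of_det2_eq_zero (hnz j)
      (det2_add_eq_zero_of_symmZero_dets huniv hv hp hq hj (hnz j) (hbal j))
      (det2_eq_zero_of_det2_eq_zero hv hi hj)
  have hD : det2 (-(b p + b q)) (b p) ≠ 0 := by simpa using hqp
  set g := coordEquiv (-(b p + b q)) (b p) hD
  have hgq : g (b q) = (-1, -1) := by
    rw [show b q = -(-(b p + b q)) - b p by abel, map_sub, map_neg, coordEquiv_left,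
      coordEquiv_right]
    ext <;> norm_num
  have hgline : ∀ i ∈ indicesOnLine b v, g (b i) = ((g (b i)).1, 0) := fun i hi => by
    ext
    · rfl
    · change det2 (-(b p + b q)) (b i) / _ = 0
      rw [det2_neg_left, hline i (mem_indicesOnLine.1 hi), neg_zero, zero_div]
  refine ⟨g, fun i => (g (b i)).1, ?_, ?_, ?_⟩
  · rw [huniv, Multiset.map_cons, Multiset.map_cons, Multiset.map_map, Function.comp_apply,
      Function.comp_apply, coordEquiv_right, hgq]
    exact congrArg _ (congrArg _ (Multiset.map_congr rfl hgline))
  · simp only [Multiset.mem_map, Finset.mem_val, not_exists, not_and]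
    intro i hi hgi
    exact hnz i (g.map_eq_zero_iff.1 (by rw [hgline i hi, hgi]; rfl))
  · have hdet : ∀ i, det2 (b i) (b p) = det2 (-(b p + b q)) (b p) * (g (b i)).1 := fun i => by
      simp only [g, coordEquiv_apply]
      field_simp
    have h := hbal p
    rw [dets_eq_map_cons huniv hnz hp hqp] at h
    simp_rw [hdet] at h
    rw [← Function.comp_def (det2 (-(b p + b q)) (b p) * ·), ← Multiset.map_map] at h
    simpa [hgq] using symmZero.of_map_mul hD h

end TwoOffLine

/-- A balanced configuration of seven nonzero plane vectors with exactly five on a line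
through the origin and the other two linearly independent is GL(2,ℝ)-equivalent (with
reordering and nonzero rescaling) to {e₁, e₂, -e₁-e₂, λe₁, -λe₁, μe₁, -μe₁}. -/
theorem stmt12 (b : Fin 7 → ℝ × ℝ) (hnz : ∀ i, b i ≠ 0)
    (hbal : ∀ j, symmZero (dets b j))
    (v : ℝ × ℝ) (hv : v ≠ 0)
    (hfive : (Finset.univ.filter (fun i => det2 (b i) v = 0)).card = 5)
    (hindep : ∀ i j : Fin 7, det2 (b i) v ≠ 0 → det2 (b j) v ≠ 0 → i ≠ j →
      det2 (b i) (b j) ≠ 0) :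
    ∃ g : (ℝ × ℝ) ≃ₗ[ℝ] (ℝ × ℝ), ∃ σ : Equiv.Perm (Fin 7), ∃ s : Fin 7 → ℝ,
      ∃ l m : ℝ, l ≠ 0 ∧ m ≠ 0 ∧ (∀ k, s k ≠ 0) ∧
      ∀ k, g (b k) =
        s k • (![((1:ℝ),(0:ℝ)), (0,1), (-1,-1), (l,0), (-l,0), (m,0), (-m,0)] : Fin 7 → ℝ × ℝ) (σ k) := by
  obtain ⟨p, q, hpq, hp, hq, huniv⟩ :=
    Finset.exists_univ_val_eq_cons_cons_filter (fun i => det2 (b i) v = 0) (by simp [hfive])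
  obtain ⟨j, hj⟩ : (indicesOnLine b v).Nonempty :=
    Finset.card_pos.1 (by rw [indicesOnLine, hfive]; norm_num)
  obtain ⟨g, y, hmap, hy0, hsymm⟩ := exists_linearEquiv_normalize huniv hv hnz hbal hp hq
    (hindep q p hq hp hpq.symm) (mem_indicesOnLine.1 hj)
  obtain ⟨l, m, hl, hm, hY⟩ :=
    hsymm.exists_eq_of_neg_one_cons hy0 (by rw [Multiset.card_map]; exact hfive)
  obtain ⟨σ, hσ⟩ := Fintype.exists_perm_of_map_univ_eq
    (w := ![((1:ℝ),(0:ℝ)), (0,1), (-1,-1), (l,0), (-l,0), (m,0), (-m,0)]) (by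
      rw [hmap, hY, Fin.univ_val_map]
      simp [← Multiset.cons_coe, Multiset.cons_swap])
  exact ⟨g, σ, fun _ => 1, l, m, hl, hm, fun _ => one_ne_zero, fun k => by simpa using hσ k⟩
end

section
/- The four rational functions R₀ = y₁y₂/(x₁x₂(y₁y₂x₃ − x₁y₂y₃ − y₁x₂z₃)), R₁ = y₁/(x₁x₂(y₁x₃ − x₁y₃)), R₂ = y₂/(x₁x₂(y₂x₃ − x₂z₃)), R₃ = 1/(x₁x₂x₃) are linearly independent over ℂ (as rational functions in the seven variables x₁,x₂,x₃,y₁,y₂,y₃,z₃). -/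
/-!
Clearing denominators turns a linear relation `∑ gᵢ pᵢ / qᵢ = 0` into the polynomial identity
`∑ gᵢ pᵢ ∏_{l ≠ i} q_l = 0`. Evaluating it at a point where `q_j` vanishes but `p_j` and the
other `qᵢ` do not kills every term except the `j`-th, so `g_j = 0`. After the invertible common
factor `1 / (x₁x₂)` is pulled out, the four denominators
`y₁y₂x₃ − x₁y₂y₃ − y₁x₂z₃`, `y₁x₃ − x₁y₃`, `y₂x₃ − x₂z₃`, `x₃` admit such points.
-/

noncomputable abbrev K : Type := FractionRing (MvPolynomial (Fin 7) ℂ)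

/-- Variables, ordered x₁, x₂, x₃, y₁, y₂, y₃, z₃. -/
noncomputable def X (i : Fin 7) : K :=
  algebraMap (MvPolynomial (Fin 7) ℂ) K (MvPolynomial.X i)

open Finset in
theorem linearIndependent_div_of_separated_poles {k A K ι : Type*} [CommRing k] [IsDomain k]
    [CommRing A] [Algebra k A] [Field K] [Algebra A K] [IsFractionRing A K] [Module k K]
    [IsScalarTower k A K] [Fintype ι] [Nontrivial ι] (p q : ι → A)
    (hpoint : ∀ j, ∃ φ : A →ₐ[k] k, φ (p j) ≠ 0 ∧ ∀ i, φ (q i) = 0 ↔ i = j) :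
    LinearIndependent k fun i ↦ algebraMap A K (p i) / algebraMap A K (q i) := by
  classical
  have hq : ∀ i, algebraMap A K (q i) ≠ 0 := fun i hi ↦ by
    obtain ⟨j, hji⟩ := exists_ne i
    obtain ⟨φ, -, hφ⟩ := hpoint j
    have : q i = 0 := IsFractionRing.injective A K (by rwa [map_zero])
    exact hji ((hφ i).mp (by rw [this, map_zero])).symm
  rw [Fintype.linearIndependent_iff]
  intro g hg j
  have hcleared : ∑ i, algebraMap k A (g i) * p i * ∏ l ∈ univ.erase i, q l = 0 := by
    apply IsFractionRing.injective A K
    rw [map_zero, ← zero_mul (∏ l, algebraMap A K (q l)), ← hg, sum_mul, map_sum]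
    refine sum_congr rfl fun i _ ↦ ?_
    rw [← mul_prod_erase univ _ (mem_univ i), ← algebraMap_smul A, Algebra.smul_def]
    simp only [map_mul, map_prod]
    field_simp [hq i]
  obtain ⟨φ, hpj, hφ⟩ := hpoint j
  have hφj : ∏ l ∈ univ.erase j, φ (q l) ≠ 0 :=
    prod_ne_zero_iff.mpr fun l hl ↦ (hφ l).not.mpr (ne_of_mem_erase hl)
  have := congrArg φ hcleared
  rw [map_sum, map_zero, sum_eq_single j] at this
  · simpa [hpj, hφj] using this
  · intro i _ hij
    rw [map_mul, map_prod, prod_eq_zero (mem_erase.mpr ⟨Ne.symm hij, mem_univ j⟩) ((hφ j).mpr rfl),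
      mul_zero]
  · simp

/-- The four residue rational functions R₀, R₁, R₂, R₃ are linearly independent
over ℂ in the field of rational functions in seven variables. -/
theorem stmt19 :
    LinearIndependent ℂ
      ![(X 3 * X 4) / (X 0 * X 1 * (X 3 * X 4 * X 2 - X 0 * X 4 * X 5 - X 3 * X 1 * X 6)),
        X 3 / (X 0 * X 1 * (X 3 * X 2 - X 0 * X 5)),
        X 4 / (X 0 * X 1 * (X 4 * X 2 - X 1 * X 6)),
        1 / (X 0 * X 1 * X 2)] := by
  let x : Fin 7 → MvPolynomial (Fin 7) ℂ := MvPolynomial.X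
  let p : Fin 4 → MvPolynomial (Fin 7) ℂ := ![x 3 * x 4, x 3, x 4, 1]
  let q : Fin 4 → MvPolynomial (Fin 7) ℂ :=
    ![x 3 * x 4 * x 2 - x 0 * x 4 * x 5 - x 3 * x 1 * x 6, x 3 * x 2 - x 0 * x 5,
      x 4 * x 2 - x 1 * x 6, x 2]
  have hpoint : ∀ j, ∃ φ : MvPolynomial (Fin 7) ℂ →ₐ[ℂ] ℂ,
      φ (p j) ≠ 0 ∧ ∀ i, φ (q i) = 0 ↔ i = j := by
    intro j
    fin_cases j
    exacts [⟨MvPolynomial.aeval ![1, 1, 2, 1, 1, 1, 1], by simp [p, x],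
        fun i ↦ by fin_cases i <;> simp [q, x]; all_goals norm_num⟩,
      ⟨MvPolynomial.aeval ![1, 1, 1, 1, 2, 1, 1], by simp [p, x],
        fun i ↦ by fin_cases i <;> simp [q, x]; all_goals norm_num⟩,
      ⟨MvPolynomial.aeval ![1, 1, 1, 2, 1, 3, 1], by simp [p, x],
        fun i ↦ by fin_cases i <;> simp [q, x]; all_goals norm_num⟩,
      ⟨MvPolynomial.aeval ![1, 1, 0, 1, 1, 1, 1], by simp [p, x],
        fun i ↦ by fin_cases i <;> simp [q, x]; all_goals norm_num⟩]
  have hfactor : ![(X 3 * X 4) / (X 0 * X 1 * (X 3 * X 4 * X 2 - X 0 * X 4 * X 5 - X 3 * X 1 * X 6)),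
        X 3 / (X 0 * X 1 * (X 3 * X 2 - X 0 * X 5)),
        X 4 / (X 0 * X 1 * (X 4 * X 2 - X 1 * X 6)),
        1 / (X 0 * X 1 * X 2)] = LinearMap.mulLeft ℂ (X 0 * X 1)⁻¹ ∘
        fun i ↦ algebraMap _ K (p i) / algebraMap _ K (q i) := by
    ext i
    fin_cases i <;>
      simp only [Fin.zero_eta, Fin.mk_one, Fin.reduceFinMk, Matrix.cons_val, Function.comp_apply,
        LinearMap.mulLeft_apply, p, q, x, X, map_mul, map_sub, map_one] <;>
      rw [div_mul_eq_div_div_swap, div_eq_inv_mul]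
  have hx : X 0 * X 1 ≠ 0 := by simp [X]
  have hinj : Function.Injective (LinearMap.mulLeft ℂ (X 0 * X 1)⁻¹) := fun a b h ↦
    mul_left_cancel₀ (inv_ne_zero hx) (by simpa only [LinearMap.mulLeft_apply] using h)
  rw [hfactor]
  exact (linearIndependent_div_of_separated_poles (K := K) p q hpoint).map' _
    (LinearMap.ker_eq_bot.mpr hinj)
end
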